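/- Let k be a positive integer and let m₁ and m₂ be relatively prime positive integers. If A₁ is a k-th power reduced set of residues modulo m₁ and A₂ is a k-th power reduced set of residues modulo m₂, then the set A = { a₁·m₂^k + a₂·m₁^k : a₁ ∈ A₁, a₂ ∈ A₂ } is a k-th power reduced set of residues modulo m₁m₂. -/

import Mathlib

/-- The k-th power greatest common divisor `(a,b)_k`: the largest k-th power `d^k`
(with `d` a positive integer) dividing both `a` and `b`. -/
noncomputable def kgcd (k : ℕ) (a b : ℤ) : ℕ :=
  sSup {n : ℕ | (∃ d : ℕ, 0 < d ∧ n = d ^ k) ∧ (n : ℤ) ∣ a ∧ (n : ℤ) ∣ b}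

/-- The Eckford Cohen totient function `φ^(k)(m)`: the number of integers `a` with
`1 ≤ a ≤ m^k` and `(a, m^k)_k = 1`. -/
noncomputable def cohenTotient (k m : ℕ) : ℕ :=
  ((Finset.Icc 1 (m ^ k)).filter fun a : ℕ => kgcd k (a : ℤ) ((m : ℤ) ^ k) = 1).card

/-- A k-th power reduced set of residues modulo `m`: a set of `φ^(k)(m)` integers, one
from each congruence class modulo `m^k` whose elements `a` satisfy `(a, m^k)_k = 1`. -/
def IsKthPowerReducedResidueSet (k m : ℕ) (A : Finset ℤ) : Prop :=
  A.card = cohenTotient k m ∧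
  (∀ a ∈ A, kgcd k a ((m : ℤ) ^ k) = 1) ∧
  ∀ a ∈ A, ∀ b ∈ A, a ≡ b [ZMOD ((m : ℤ) ^ k)] → a = b


/-!
Since `m ^ k` has the same prime divisors as `m`, the condition `(a, m ^ k)_k = 1` says that
`p ^ k ∤ a` for every prime `p ∣ m`. For a prime `p ∣ m₁`, `p ^ k` divides `a₂ * m₁ ^ k` and is
prime to `m₂ ^ k`, so `a₁ * m₂ ^ k + a₂ * m₁ ^ k` is k-th power prime to `(m₁ * m₂) ^ k` exactly
when `a₁` is so to `m₁ ^ k` and `a₂` to `m₂ ^ k`. By the Chinese remainder theorem the sums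
are pairwise incongruent modulo `(m₁ * m₂) ^ k`, and a Bézout relation `u * m₁ ^ k + v * m₂ ^ k = 1`
writes any `x` as `(v * x) * m₂ ^ k + (u * x) * m₁ ^ k`, so every admissible class is reached.
Finally, a set of pairwise incongruent admissible integers has `φ^(k)(m)` elements exactly when
it meets every admissible class modulo `m ^ k`, because the admissible integers in `[1, m ^ k]`
form such a set.
-/

section KthPowerGcd

variable {k : ℕ}

theorem kgcd_congr {a b c : ℤ} (h : a ≡ b [ZMOD c]) : kgcd k a c = kgcd k b c := by
  unfold kgcd
  congr 1
  ext n
  simp only [Set.mem_ofPred_eq, and_congr_right_iff]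
  intro _
  constructor
  · rintro ⟨hna, hnc⟩
    exact ⟨(dvd_iff_dvd_of_dvd_sub (hnc.trans h.dvd)).2 hna, hnc⟩
  · rintro ⟨hnb, hnc⟩
    exact ⟨(dvd_iff_dvd_of_dvd_sub (hnc.trans h.dvd)).1 hnb, hnc⟩

theorem kgcd_eq_one_iff (hk : k ≠ 0) {a b : ℤ} (hb : b ≠ 0) :
    kgcd k a b = 1 ↔ ∀ d : ℕ, 1 < d → (d : ℤ) ^ k ∣ a → ¬(d : ℤ) ^ k ∣ b := by
  set S := {n : ℕ | (∃ d : ℕ, 0 < d ∧ n = d ^ k) ∧ (n : ℤ) ∣ a ∧ (n : ℤ) ∣ b}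
  have hS : kgcd k a b = sSup S := rfl
  have one_mem : 1 ∈ S := ⟨⟨1, one_pos, (one_pow k).symm⟩, one_dvd a, one_dvd b⟩
  constructor
  · intro h1 d hd hda hdb
    have bdd : BddAbove S := ⟨b.natAbs, fun n hn =>
      Nat.le_of_dvd (Int.natAbs_pos.2 hb) (Int.natCast_dvd.1 hn.2.2)⟩
    have hle : d ^ k ≤ 1 :=
      h1 ▸ le_csSup bdd ⟨⟨d, by omega, rfl⟩, by exact_mod_cast hda, by exact_mod_cast hdb⟩
    exact absurd hle (Nat.one_lt_pow hk hd).not_ge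
  · intro h
    refine hS ▸ IsGreatest.csSup_eq ⟨one_mem, ?_⟩
    rintro _ ⟨⟨d, hd, rfl⟩, hda, hdb⟩
    by_contra hlt
    have hd1 : 1 < d := lt_of_not_ge fun hd1 => hlt (by rw [show d = 1 by omega, one_pow])
    exact h d hd1 (by exact_mod_cast hda) (by exact_mod_cast hdb)

theorem kgcd_pow_eq_one_iff (hk : k ≠ 0) {m : ℕ} (hm : m ≠ 0) {a : ℤ} :
    kgcd k a ((m : ℤ) ^ k) = 1 ↔ ∀ p : ℕ, p.Prime → p ∣ m → ¬(p : ℤ) ^ k ∣ a := by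
  rw [kgcd_eq_one_iff hk (by positivity)]
  constructor
  · intro h p hp hpm hpa
    exact h p hp.one_lt hpa (pow_dvd_pow_of_dvd (Int.natCast_dvd_natCast.2 hpm) k)
  · intro h d hd hda hdm
    obtain ⟨p, hp, hpd⟩ := Nat.exists_prime_and_dvd hd.ne'
    have hdm' : d ∣ m := (Nat.pow_dvd_pow_iff hk).1 (by exact_mod_cast hdm)
    exact h p hp (hpd.trans hdm')
      ((pow_dvd_pow_of_dvd (Int.natCast_dvd_natCast.2 hpd) k).trans hda)

theorem pow_dvd_mul_add_mul_iff {d m₁ m₂ : ℕ} (hd : d ∣ m₁)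
    (h : m₁.Coprime m₂) (b₁ b₂ : ℤ) :
    (d : ℤ) ^ k ∣ b₁ * (m₂ : ℤ) ^ k + b₂ * (m₁ : ℤ) ^ k ↔ (d : ℤ) ^ k ∣ b₁ := by
  rw [dvd_add_left (dvd_mul_of_dvd_right
    (pow_dvd_pow_of_dvd (Int.natCast_dvd_natCast.2 hd) k) b₂)]
  have hcop : IsCoprime ((d : ℤ) ^ k) ((m₂ : ℤ) ^ k) :=
    (Nat.isCoprime_iff_coprime.2 (h.coprime_dvd_left hd)).pow
  exact ⟨hcop.dvd_of_dvd_mul_right, fun hdb => dvd_mul_of_dvd_left hdb _⟩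

theorem kgcd_mul_add_mul_eq_one_iff (hk : k ≠ 0) {m₁ m₂ : ℕ} (hm₁ : m₁ ≠ 0) (hm₂ : m₂ ≠ 0)
    (h : m₁.Coprime m₂) (b₁ b₂ : ℤ) :
    kgcd k (b₁ * (m₂ : ℤ) ^ k + b₂ * (m₁ : ℤ) ^ k) ((m₁ : ℤ) ^ k * (m₂ : ℤ) ^ k) = 1 ↔
      kgcd k b₁ ((m₁ : ℤ) ^ k) = 1 ∧ kgcd k b₂ ((m₂ : ℤ) ^ k) = 1 := by
  rw [← mul_pow, ← Nat.cast_mul, kgcd_pow_eq_one_iff hk (mul_ne_zero hm₁ hm₂),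
    kgcd_pow_eq_one_iff hk hm₁, kgcd_pow_eq_one_iff hk hm₂]
  have swap := add_comm (b₁ * (m₂ : ℤ) ^ k) (b₂ * (m₁ : ℤ) ^ k)
  constructor
  · intro H
    refine ⟨fun p hp hpm => ?_, fun p hp hpm => ?_⟩
    · rw [← pow_dvd_mul_add_mul_iff hpm h b₁ b₂]
      exact H p hp (dvd_mul_of_dvd_left hpm m₂)
    · rw [← pow_dvd_mul_add_mul_iff hpm h.symm b₂ b₁, ← swap]
      exact H p hp (dvd_mul_of_dvd_right hpm m₁)
  · rintro ⟨H₁, H₂⟩ p hp hpm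
    rcases hp.dvd_mul.1 hpm with hpm₁ | hpm₂
    · rw [pow_dvd_mul_add_mul_iff hpm₁ h b₁ b₂]
      exact H₁ p hp hpm₁
    · rw [swap, pow_dvd_mul_add_mul_iff hpm₂ h.symm b₂ b₁]
      exact H₂ p hp hpm₂

end KthPowerGcd

theorem mul_add_mul_modEq_iff {M₁ M₂ a₁ a₂ b₁ b₂ : ℤ} (hM : IsCoprime M₁ M₂) :
    a₁ * M₂ + a₂ * M₁ ≡ b₁ * M₂ + b₂ * M₁ [ZMOD M₁ * M₂] ↔
      a₁ ≡ b₁ [ZMOD M₁] ∧ a₂ ≡ b₂ [ZMOD M₂] := by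
  simp only [Int.modEq_iff_dvd]
  rw [show b₁ * M₂ + b₂ * M₁ - (a₁ * M₂ + a₂ * M₁) = (b₁ - a₁) * M₂ + (b₂ - a₂) * M₁ by ring]
  constructor
  · intro hdvd
    refine ⟨hM.dvd_of_dvd_mul_right ?_, hM.symm.dvd_of_dvd_mul_right ?_⟩
    · exact (dvd_add_left (dvd_mul_left M₁ _)).1 ((dvd_mul_right M₁ M₂).trans hdvd)
    · exact (dvd_add_right (dvd_mul_left M₂ _)).1 ((dvd_mul_left M₂ M₁).trans hdvd)
  · rintro ⟨h₁, h₂⟩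
    exact dvd_add (mul_dvd_mul h₁ dvd_rfl) (mul_comm M₁ M₂ ▸ mul_dvd_mul h₂ dvd_rfl)

def IsResidueSystem (n : ℤ) (P : ℤ → Prop) (A : Finset ℤ) : Prop :=
  (∀ a ∈ A, P a) ∧ (∀ a ∈ A, ∀ b ∈ A, a ≡ b [ZMOD n] → a = b) ∧
    ∀ x, P x → ∃ a ∈ A, x ≡ a [ZMOD n]

namespace IsResidueSystem

variable {n : ℤ} {P : ℤ → Prop} {A B : Finset ℤ}

theorem image_emod_subset (hB : IsResidueSystem n P B) (hA : ∀ a ∈ A, P a) :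
    A.image (· % n) ⊆ B.image (· % n) := by
  intro r hr
  obtain ⟨a, ha, rfl⟩ := Finset.mem_image.1 hr
  obtain ⟨b, hb, hab⟩ := hB.2.2 a (hA a ha)
  exact Finset.mem_image.2 ⟨b, hb, hab.symm⟩

theorem card_eq (hA : IsResidueSystem n P A) (hB : IsResidueSystem n P B) :
    A.card = B.card := by
  rw [← Finset.card_image_of_injOn hA.2.1, ← Finset.card_image_of_injOn hB.2.1,
    (hB.image_emod_subset hA.1).antisymm (hA.image_emod_subset hB.1)]

theorem of_card_eq (hB : IsResidueSystem n P B) (hP : ∀ a ∈ A, P a)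
    (hinj : ∀ a ∈ A, ∀ b ∈ A, a ≡ b [ZMOD n] → a = b) (hcard : A.card = B.card) :
    IsResidueSystem n P A := by
  have himage : A.image (· % n) = B.image (· % n) := by
    refine Finset.eq_of_subset_of_card_le (hB.image_emod_subset hP) ?_
    rw [Finset.card_image_of_injOn hinj, Finset.card_image_of_injOn hB.2.1, hcard]
  refine ⟨hP, hinj, fun x hx => ?_⟩
  obtain ⟨b, hb, hxb⟩ := hB.2.2 x hx
  obtain ⟨a, ha, hab⟩ := Finset.mem_image.1 (himage ▸ Finset.mem_image_of_mem (· % n) hb)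
  exact ⟨a, ha, hxb.trans hab.symm⟩

theorem image_mul_add_mul {M₁ M₂ : ℤ} (hM : IsCoprime M₁ M₂)
    {P₁ P₂ P : ℤ → Prop} (hP : ∀ b₁ b₂, P (b₁ * M₂ + b₂ * M₁) ↔ P₁ b₁ ∧ P₂ b₂)
    {A₁ A₂ : Finset ℤ} (h₁ : IsResidueSystem M₁ P₁ A₁) (h₂ : IsResidueSystem M₂ P₂ A₂) :
    IsResidueSystem (M₁ * M₂) P ((A₁ ×ˢ A₂).image fun p => p.1 * M₂ + p.2 * M₁) := by
  refine ⟨?_, ?_, fun x hx => ?_⟩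
  · simp only [Finset.forall_mem_image, Finset.mem_product]
    rintro ⟨a₁, a₂⟩ ⟨ha₁, ha₂⟩
    exact (hP a₁ a₂).2 ⟨h₁.1 a₁ ha₁, h₂.1 a₂ ha₂⟩
  · simp only [Finset.forall_mem_image, Finset.mem_product]
    rintro ⟨a₁, a₂⟩ ⟨ha₁, ha₂⟩ ⟨b₁, b₂⟩ ⟨hb₁, hb₂⟩ hab
    obtain ⟨hab₁, hab₂⟩ := (mul_add_mul_modEq_iff hM).1 hab
    rw [h₁.2.1 a₁ ha₁ b₁ hb₁ hab₁, h₂.2.1 a₂ ha₂ b₂ hb₂ hab₂]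
  · obtain ⟨u, v, huv⟩ := id hM
    have hx_eq : x = v * x * M₂ + u * x * M₁ := by linear_combination (-x) * huv
    rw [hx_eq, hP] at hx
    obtain ⟨a₁, ha₁, hxa₁⟩ := h₁.2.2 _ hx.1
    obtain ⟨a₂, ha₂, hxa₂⟩ := h₂.2.2 _ hx.2
    refine ⟨_, Finset.mem_image.2 ⟨(a₁, a₂), Finset.mem_product.2 ⟨ha₁, ha₂⟩, rfl⟩, ?_⟩
    rw [hx_eq]
    exact (mul_add_mul_modEq_iff hM).2 ⟨hxa₁, hxa₂⟩

end IsResidueSystem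

theorem isResidueSystem_filter_Icc {n : ℤ} (hn : 0 < n) {P : ℤ → Prop} [DecidablePred P]
    (hP : ∀ a b, a ≡ b [ZMOD n] → P a → P b) :
    IsResidueSystem n P ((Finset.Icc 1 n).filter P) := by
  simp only [IsResidueSystem, Finset.mem_filter, Finset.mem_Icc]
  refine ⟨fun a ha => ha.2, fun a ha b hb hab => ?_, fun x hx => ?_⟩
  · have hab' : (a - 1) % n = (b - 1) % n := hab.sub_right 1
    rw [Int.emod_eq_of_lt (by omega) (by omega), Int.emod_eq_of_lt (by omega) (by omega)] at hab'
    omega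
  · have hxr : x ≡ (x - 1) % n + 1 [ZMOD n] := by
      simpa using ((Int.mod_modEq (x - 1) n).add_right 1).symm
    have := Int.emod_nonneg (x - 1) hn.ne'
    have := Int.emod_lt_of_pos (x - 1) hn
    exact ⟨(x - 1) % n + 1, ⟨⟨by omega, by omega⟩, hP x _ hxr hx⟩, hxr⟩

theorem card_filter_Icc_kgcd_eq_cohenTotient (k m : ℕ) :
    ((Finset.Icc 1 ((m : ℤ) ^ k)).filter fun a => kgcd k a ((m : ℤ) ^ k) = 1).card =
      cohenTotient k m := by
  refine Finset.card_nbij' Int.toNat (fun a : ℕ => (a : ℤ)) ?_ ?_ ?_ ?_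
  all_goals intro a ha
  all_goals simp only [Finset.coe_filter, Finset.mem_Icc, Set.mem_ofPred_eq] at ha ⊢
  · lift a to ℕ using by omega
    simpa only [Int.toNat_natCast, Nat.one_le_cast, ← Nat.cast_pow, Nat.cast_le] using ha
  · exact_mod_cast ha
  · exact Int.toNat_of_nonneg (by omega)
  · exact Int.toNat_natCast a

theorem isKthPowerReducedResidueSet_iff {k m : ℕ} (hm : m ≠ 0) {A : Finset ℤ} :
    IsKthPowerReducedResidueSet k m A ↔
      IsResidueSystem ((m : ℤ) ^ k) (fun a => kgcd k a ((m : ℤ) ^ k) = 1) A := by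
  have hB := isResidueSystem_filter_Icc (n := (m : ℤ) ^ k) (by positivity)
    (P := fun a => kgcd k a ((m : ℤ) ^ k) = 1) fun a b hab => (kgcd_congr hab).symm.trans
  rw [IsKthPowerReducedResidueSet, ← card_filter_Icc_kgcd_eq_cohenTotient]
  exact ⟨fun ⟨hcard, hP, hinj⟩ => hB.of_card_eq hP hinj hcard,
    fun hA => ⟨hA.card_eq hB, hA.1, hA.2.1⟩⟩

/-- If `A₁` and `A₂` are k-th power reduced sets of residues modulo coprime `m₁` and
`m₂`, then `{a₁·m₂^k + a₂·m₁^k}` is a k-th power reduced set of residues modulo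
`m₁·m₂`. -/
theorem reducedResidueSet_mul (k : ℕ) (hk : 0 < k) (m₁ m₂ : ℕ)
    (hm₁ : 0 < m₁) (hm₂ : 0 < m₂) (h : Nat.Coprime m₁ m₂)
    (A₁ A₂ : Finset ℤ)
    (hA₁ : IsKthPowerReducedResidueSet k m₁ A₁)
    (hA₂ : IsKthPowerReducedResidueSet k m₂ A₂) :
    IsKthPowerReducedResidueSet k (m₁ * m₂)
      ((A₁ ×ˢ A₂).image fun p => p.1 * (m₂ : ℤ) ^ k + p.2 * (m₁ : ℤ) ^ k) := by
  have hM : IsCoprime ((m₁ : ℤ) ^ k) ((m₂ : ℤ) ^ k) := (Nat.isCoprime_iff_coprime.2 h).pow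
  rw [isKthPowerReducedResidueSet_iff hm₁.ne'] at hA₁
  rw [isKthPowerReducedResidueSet_iff hm₂.ne'] at hA₂
  rw [isKthPowerReducedResidueSet_iff (Nat.mul_ne_zero hm₁.ne' hm₂.ne'), Nat.cast_mul, mul_pow]
  exact hA₁.image_mul_add_mul hM (kgcd_mul_add_mul_eq_one_iff hk.ne' hm₁.ne' hm₂.ne' h) hA₂
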